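/- Counterfactual stability of the Gumbel-Max SCM (conditional-measure form): let S be a finite nonempty type, let p and p' be strictly positive probability vectors on S, and let i, j ∈ S with j ≠ i satisfy p' i / p i ≥ p' j / p j. Let E_i = { g : S → ℝ | i is the strict argmax of (log ∘ p) + g }, which has μ_G^S(E_i) = p i > 0. Then the conditional measure of μ_G^S given E_i assigns probability 0 to the event { g | ∀ k ∈ S, log (p' j) + g j ≥ log (p' k) + g k }, i.e., conditioned on having observed outcome i under p, the counterfactual outcome under p' is almost surely not j. -/

import Mathlib

open MeasureTheory Real ProbabilityTheory

/-- The uniform probability measure on the open interval (0,1). -/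
noncomputable def uniform01 : Measure ℝ := volume.restrict (Set.Ioo (0 : ℝ) 1)

/-- The standard Gumbel distribution on ℝ: the pushforward of the uniform
measure on (0,1) under `u ↦ -log(-log u)`; its CDF is `x ↦ exp (-exp (-x))`. -/
noncomputable def stdGumbel : Measure ℝ :=
  uniform01.map (fun u : ℝ => -Real.log (-Real.log u))

/-- The product measure on `S → ℝ` with i.i.d. standard Gumbel coordinates. -/
noncomputable def gumbelPi (S : Type*) [Fintype S] : Measure (S → ℝ) :=
  Measure.pi (fun _ : S => stdGumbel)

/-! Gumbel max trick: if `x` is the Gumbel coordinate of `i`, each other coordinate `k` stays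
below `x + c i - c k` with probability `F(x) ^ exp (c k - c i)`, `F` the Gumbel CDF. Since `F(x)` is
uniform on `(0,1)`, integrating `F(x) ^ r` gives `1 / (r + 1)`, which for
`r = ∑_{k ≠ i} exp (c k - c i)` is the softmax weight of `i`. Counterfactual stability is then
deterministic: `i` strictly winning under `c` and `j` winning under `c'` force
`c' j - c j > c' i - c i`. -/

theorem measurable_neg_log_neg_log : Measurable fun u : ℝ => -log (-log u) :=
  (measurable_log.comp measurable_log.neg).neg

instance : IsProbabilityMeasure uniform01 :=
  ⟨by simp [uniform01]⟩

instance : IsProbabilityMeasure stdGumbel :=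
  Measure.isProbabilityMeasure_map measurable_neg_log_neg_log.aemeasurable

theorem neg_log_neg_log_lt_iff {u : ℝ} (hu : u ∈ Set.Ioo 0 1) (b : ℝ) :
    -log (-log u) < b ↔ u < exp (-exp (-b)) := by
  have hlog : 0 < -log u := neg_pos.2 (log_neg hu.1 hu.2)
  rw [neg_lt, lt_log_iff_exp_lt hlog, lt_neg, ← log_lt_iff_lt_exp hu.1]

theorem stdGumbel_Iio (b : ℝ) : stdGumbel (Set.Iio b) = ENNReal.ofReal (exp (-exp (-b))) := by
  have hpre : (fun u : ℝ => -log (-log u)) ⁻¹' Set.Iio b ∩ Set.Ioo 0 1 =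
      Set.Ioo 0 (exp (-exp (-b))) := by
    ext u
    constructor
    · rintro ⟨h, hu⟩
      exact ⟨hu.1, (neg_log_neg_log_lt_iff hu b).1 h⟩
    · rintro ⟨hu0, hub⟩
      have hu : u ∈ Set.Ioo 0 1 :=
        ⟨hu0, hub.trans (exp_lt_one_iff.2 (neg_neg_of_pos (exp_pos _)))⟩
      exact ⟨(neg_log_neg_log_lt_iff hu b).2 hub, hu⟩
  rw [stdGumbel, Measure.map_apply measurable_neg_log_neg_log measurableSet_Iio, uniform01,
    Measure.restrict_apply (measurable_neg_log_neg_log measurableSet_Iio), hpre, volume_Ioo,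
    sub_zero]

theorem lintegral_exp_neg_exp_neg_mul_stdGumbel {r : ℝ} (hr : -1 < r) :
    ∫⁻ x, ENNReal.ofReal (exp (-exp (-x) * r)) ∂stdGumbel = ENNReal.ofReal (1 / (r + 1)) := by
  have hmeas : Measurable fun x : ℝ => ENNReal.ofReal (exp (-exp (-x) * r)) := by fun_prop
  have hrpow : ∀ u ∈ Set.Ioo (0 : ℝ) 1,
      ENNReal.ofReal (exp (-exp (-(-log (-log u))) * r)) = ENNReal.ofReal (u ^ r) := by
    rintro u ⟨hu0, hu1⟩
    rw [neg_neg, exp_log (neg_pos.2 (log_neg hu0 hu1)), rpow_def_of_pos hu0, neg_neg, mul_comm]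
  have hint : IntegrableOn (fun u : ℝ => u ^ r) (Set.Ioo 0 1) :=
    (intervalIntegral.intervalIntegrable_rpow' hr).1.mono_set Set.Ioo_subset_Ioc_self
  rw [stdGumbel, lintegral_map hmeas measurable_neg_log_neg_log, uniform01,
    setLIntegral_congr_fun measurableSet_Ioo hrpow,
    ← ofReal_integral_eq_lintegral_ofReal hint
      ((ae_restrict_mem measurableSet_Ioo).mono fun u hu => rpow_nonneg hu.1.le r),
    ← integral_Ioc_eq_integral_Ioo, ← intervalIntegral.integral_of_le zero_le_one,
    integral_rpow (Or.inl hr), one_rpow, zero_rpow (by linarith), sub_zero]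

theorem pi_setOf_forall_ne_lt_eq_lintegral {ι : Type*} [Fintype ι] [DecidableEq ι]
    (μ : ι → Measure ℝ) [∀ k, IsProbabilityMeasure (μ k)] (i : ι) {f : ι → ℝ → ℝ}
    (hf : ∀ k, Measurable (f k)) :
    Measure.pi μ {g | ∀ k ≠ i, g k < f k (g i)} =
      ∫⁻ x, ∏ k ∈ Finset.univ.erase i, μ k (Set.Iio (f k x)) ∂μ i := by
  set e := MeasurableEquiv.piEquivPiSubtypeProd (fun _ : ι => ℝ) (· ≠ i)
  set s : Set (({k // k ≠ i} → ℝ) × ({k // ¬k ≠ i} → ℝ)) :=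
    {z | ∀ k, z.1 k < f k (z.2 ⟨i, not_not.2 rfl⟩)}
  have hs : MeasurableSet s := by
    simp only [s, Set.ofPred_forall]
    exact .iInter fun k => measurableSet_lt (by fun_prop) ((hf k).comp (by fun_prop))
  have hpre : {g : ι → ℝ | ∀ k ≠ i, g k < f k (g i)} = e ⁻¹' s := by
    ext g
    exact ⟨fun h k => h k k.2, fun h k hk => h ⟨k, hk⟩⟩
  have hsection (a : {k // ¬k ≠ i} → ℝ) :
      (·, a) ⁻¹' s =
        Set.univ.pi fun k : {k // k ≠ i} => Set.Iio (f k (a ⟨i, not_not.2 rfl⟩)) := by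
    ext y
    simp [s]
  have hmeas : Measurable fun x => ∏ k ∈ Finset.univ.erase i, μ k (Set.Iio (f k x)) :=
    Finset.measurable_prod _ fun k _ =>
      (Monotone.measurable fun _ _ h => measure_mono (Set.Iio_subset_Iio h)).comp (hf k)
  rw [hpre, (measurePreserving_piEquivPiSubtypeProd μ _).measure_preimage hs.nullMeasurableSet,
    Measure.prod_apply_symm hs, ← (measurePreserving_eval (fun k : {k // ¬k ≠ i} => μ k)
      ⟨i, not_not.2 rfl⟩).lintegral_comp hmeas]
  refine lintegral_congr fun a => ?_
  rw [hsection, Measure.pi_pi,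
    Finset.prod_subtype (Finset.univ.erase i) (p := (· ≠ i)) (by simp)]

theorem gumbelPi_strictArgmax {S : Type*} [Fintype S] (c : S → ℝ) (i : S) :
    gumbelPi S {g | ∀ k, k ≠ i → c k + g k < c i + g i} =
      ENNReal.ofReal (exp (c i) / ∑ k, exp (c k)) := by
  classical
  set r := ∑ k ∈ Finset.univ.erase i, exp (c k - c i)
  have hr : -1 < r := by linarith [Finset.sum_nonneg fun k (_ : k ∈ Finset.univ.erase i) =>
    (exp_pos (c k - c i)).le]
  have hset : {g : S → ℝ | ∀ k, k ≠ i → c k + g k < c i + g i} =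
      {g | ∀ k ≠ i, g k < g i + (c i - c k)} := by
    ext g
    refine forall₂_congr fun k _ => ?_
    constructor <;> intro h <;> linarith
  have hcdf (x : ℝ) (k : S) : stdGumbel (Set.Iio (x + (c i - c k))) =
      ENNReal.ofReal (exp (-exp (-x) * exp (c k - c i))) := by
    rw [stdGumbel_Iio, neg_add, exp_add, neg_sub]
    ring_nf
  have hprod (x : ℝ) : ∏ k ∈ Finset.univ.erase i, stdGumbel (Set.Iio (x + (c i - c k))) =
      ENNReal.ofReal (exp (-exp (-x) * r)) := by
    simp_rw [r, hcdf, ← ENNReal.ofReal_prod_of_nonneg fun _ _ => (exp_pos _).le, ← exp_sum,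
      ← Finset.mul_sum]
  have hweight : 1 / (r + 1) = exp (c i) / ∑ k, exp (c k) := by
    rw [← Finset.add_sum_erase _ _ (Finset.mem_univ i)]
    simp_rw [r, exp_sub, ← Finset.sum_div]
    field_simp
    ring
  rw [gumbelPi, hset, pi_setOf_forall_ne_lt_eq_lintegral _ i fun k => measurable_add_const _]
  simp_rw [hprod]
  rw [lintegral_exp_neg_exp_neg_mul_stdGumbel hr, hweight]

theorem measurableSet_strictArgmax {S : Type*} [Countable S] (c : S → ℝ) (i : S) :
    MeasurableSet {g : S → ℝ | ∀ k, k ≠ i → c k + g k < c i + g i} := by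
  simp only [Set.ofPred_forall]
  exact .iInter fun k => .iInter fun _ => measurableSet_lt (by fun_prop) (by fun_prop)

theorem disjoint_strictArgmax_argmax {S : Type*} {c c' : S → ℝ} {i j : S} (hij : j ≠ i)
    (h : c' j - c j ≤ c' i - c i) :
    Disjoint {g : S → ℝ | ∀ k, k ≠ i → c k + g k < c i + g i}
      {g | ∀ k, c' k + g k ≤ c' j + g j} :=
  Set.disjoint_left.2 fun g hi hj => by linarith [hi j hij, hj i]

theorem gumbelMax_cf_stability_cond_general {S : Type*} [Fintype S]
    (p p' : S → ℝ) (hp : ∀ s, 0 < p s) (hpsum : ∑ s, p s = 1)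
    (hp' : ∀ s, 0 < p' s)
    (i j : S) (hij : j ≠ i) (hratio : p' i / p i ≥ p' j / p j) :
    gumbelPi S {g : S → ℝ | ∀ k : S, k ≠ i →
        Real.log (p k) + g k < Real.log (p i) + g i} = ENNReal.ofReal (p i)
    ∧ 0 < ENNReal.ofReal (p i)
    ∧ (gumbelPi S)[|{g : S → ℝ | ∀ k : S, k ≠ i →
          Real.log (p k) + g k < Real.log (p i) + g i}]
        {g : S → ℝ | ∀ k : S, Real.log (p' k) + g k ≤ Real.log (p' j) + g j}
        = 0 := by
  have hlaw := gumbelPi_strictArgmax (fun k => log (p k)) i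
  simp only [exp_log (hp _), hpsum, div_one] at hlaw
  refine ⟨hlaw, ENNReal.ofReal_pos.2 (hp i), ?_⟩
  have hlog : log (p' j) - log (p j) ≤ log (p' i) - log (p i) := by
    rw [← log_div (hp' j).ne' (hp j).ne', ← log_div (hp' i).ne' (hp i).ne']
    exact log_le_log (div_pos (hp' j) (hp j)) hratio
  rw [cond_apply (measurableSet_strictArgmax _ i),
    (disjoint_strictArgmax_argmax (c := fun k => log (p k)) hij hlog).inter_eq, measure_empty,
    mul_zero]

/-- Counterfactual stability of the Gumbel-Max SCM, conditional-measure form: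
the event `E_i` that `i` is the strict argmax of `log ∘ p + g` has probability
`p i > 0`, and conditionally on `E_i`, the counterfactual outcome under `p'`
(with the same noise) is almost surely not `j`, whenever `j ≠ i` and
`p' i / p i ≥ p' j / p j`. -/
theorem gumbelMax_cf_stability_cond {S : Type*} [Fintype S] [Nonempty S]
    (p p' : S → ℝ) (hp : ∀ s, 0 < p s) (hpsum : ∑ s, p s = 1)
    (hp' : ∀ s, 0 < p' s) (hp'sum : ∑ s, p' s = 1)
    (i j : S) (hij : j ≠ i) (hratio : p' i / p i ≥ p' j / p j) :
    gumbelPi S {g : S → ℝ | ∀ k : S, k ≠ i →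
        Real.log (p k) + g k < Real.log (p i) + g i} = ENNReal.ofReal (p i)
    ∧ 0 < ENNReal.ofReal (p i)
    ∧ (gumbelPi S)[|{g : S → ℝ | ∀ k : S, k ≠ i →
          Real.log (p k) + g k < Real.log (p i) + g i}]
        {g : S → ℝ | ∀ k : S, Real.log (p' k) + g k ≤ Real.log (p' j) + g j}
        = 0 :=
  gumbelMax_cf_stability_cond_general p p' hp hpsum hp' i j hij hratio
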